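/- For every finitely supported real sequence (u_n)_{n≥0} with u_0 = u_1 = 0, the discrete Leray inequality holds: ∑_{n≥2} n (u_n − u_{n-1})² ≥ (1/4) ∑_{n≥2} u_n² / (n (ln n)²). -/

import Mathlib

/-!
Ground-state method. If `w` is positive with `w 0 = 0`, completing the square in each term gives
`∑ c n (v (n+1) - v n)² ≥ ∑ V n v (n+1)²` for every `v` with `v 0 = 0`, where
`V = -∇(c ∇w) / w` is the Hardy weight of `w`. For the ground state `w n = √(H_n - 1)`, a discrete
`√(log n)`, three consecutive values `p ≤ q ≤ r` satisfy `q² - p² = 1/n` and `r² - q² = 1/(n+1)`,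
so `V n = (r² - p²) / (q (q + p) (q + r) (r + p))`, which is about `1 / (4 n log² n)`.
The bound `H_n - 1 ≤ log n - (log 2 - 1/2)` leaves enough room for the error terms.
-/

open Finset Real

theorem ground_state_sq_sub_le {a b : ℝ} (ha : 0 < a) (hb : 0 < b) (x y : ℝ) :
    (1 - b / a) * x ^ 2 - (a / b - 1) * y ^ 2 ≤ (x - y) ^ 2 := by
  have key : (x - y) ^ 2 - ((1 - b / a) * x ^ 2 - (a / b - 1) * y ^ 2) =
      (b * x - a * y) ^ 2 / (a * b) := by
    field_simp
    ring
  linarith [div_nonneg (sq_nonneg (b * x - a * y)) (mul_pos ha hb).le]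

noncomputable def hardyWeight (c w : ℕ → ℝ) (n : ℕ) : ℝ :=
  c n * (1 - w n / w (n + 1)) - c (n + 1) * (w (n + 2) / w (n + 1) - 1)

theorem sum_hardyWeight_mul_sq_le (c w v : ℕ → ℝ) (hc : ∀ n, 0 ≤ c n) (hw₀ : w 0 = 0)
    (hw : ∀ n, 0 < w (n + 1)) (hv₀ : v 0 = 0) {N : ℕ} (hvN : v N = 0) :
    ∑ n ∈ range N, hardyWeight c w n * v (n + 1) ^ 2 ≤
      ∑ n ∈ range N, c n * (v (n + 1) - v n) ^ 2 := by
  set g : ℕ → ℝ := fun n ↦ c n * (w (n + 1) / w n - 1) * v n ^ 2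
  have telescope : ∑ n ∈ range N, (g (n + 1) - g n) = 0 := by
    rw [sum_range_sub]
    simp [g, hv₀, hvN]
  calc ∑ n ∈ range N, hardyWeight c w n * v (n + 1) ^ 2
      = ∑ n ∈ range N, (c n * (1 - w n / w (n + 1)) * v (n + 1) ^ 2 - g n) -
          ∑ n ∈ range N, (g (n + 1) - g n) := by
        rw [← sum_sub_distrib]
        exact sum_congr rfl fun n _ ↦ by simp only [hardyWeight, g]; ring
    _ ≤ ∑ n ∈ range N, c n * (v (n + 1) - v n) ^ 2 := by
        rw [telescope, sub_zero]
        refine sum_le_sum fun n _ ↦ ?_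
        cases n with
        | zero => simp [g, hw₀, hv₀]
        | succ n =>
          have := mul_le_mul_of_nonneg_left
            (ground_state_sq_sub_le (hw (n + 1)) (hw n) (v (n + 2)) (v (n + 1))) (hc (n + 1))
          simp only [g]
          linarith

theorem ground_state_weight_eq {k p q r : ℝ} (hp : 0 ≤ p) (hq : 0 < q) (hr : 0 < r)
    (hqp : k * (q ^ 2 - p ^ 2) = 1) (hrq : (k + 1) * (r ^ 2 - q ^ 2) = 1) :
    k * (1 - p / q) - (k + 1) * (r / q - 1) =
      (r ^ 2 - p ^ 2) / (q * (q + p) * (q + r) * (r + p)) := by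
  rw [eq_div_iff (by positivity)]
  field_simp
  linear_combination (q + r) * (r + p) * hqp - (q + p) * (r + p) * hrq

theorem div_le_ground_state_weight {k p q r : ℝ} (hk : 0 < k) (hp : 0 ≤ p) (hq : 0 < q)
    (hr : 0 < r) (hqp : k * (q ^ 2 - p ^ 2) = 1) (hrq : (k + 1) * (r ^ 2 - q ^ 2) = 1) :
    (1 / k + 1 / (k + 1)) / (4 * q ^ 2 * (2 * q ^ 2 + 1 / (k + 1))) ≤
      k * (1 - p / q) - (k + 1) * (r / q - 1) := by
  have hqp' : q ^ 2 - p ^ 2 = 1 / k := by field_simp; linarith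
  have hrq' : r ^ 2 - q ^ 2 = 1 / (k + 1) := by field_simp; linarith
  have hpq : p ≤ q := by nlinarith [one_div_pos.2 hk]
  have hqr : q ≤ r := by nlinarith [one_div_pos.2 (by linarith : 0 < k + 1)]
  have hqp_le : q * (q + p) ≤ 2 * q ^ 2 := by nlinarith
  have hrp_le : (q + r) * (r + p) ≤ 2 * (q ^ 2 + r ^ 2) := by nlinarith [sq_nonneg (q - r)]
  have hD : q * (q + p) * (q + r) * (r + p) ≤ 4 * q ^ 2 * (2 * q ^ 2 + 1 / (k + 1)) :=
    calc q * (q + p) * (q + r) * (r + p) = q * (q + p) * ((q + r) * (r + p)) := by ring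
      _ ≤ (2 * q ^ 2) * (2 * (q ^ 2 + r ^ 2)) :=
          mul_le_mul hqp_le hrp_le (by positivity) (by positivity)
      _ = 4 * q ^ 2 * (2 * q ^ 2 + 1 / (k + 1)) := by rw [← hrq']; ring
  have hnum : r ^ 2 - p ^ 2 = 1 / k + 1 / (k + 1) := by linarith
  rw [ground_state_weight_eq hp hq hr hqp hrq, hnum]
  exact div_le_div_of_nonneg_left (by positivity) (by positivity) hD

theorem one_div_four_mul_sq_le_div {k s L c : ℝ} (hk : 0 < k) (hs : 0 < s) (hsL : s + c ≤ L)
    (hLk : L ≤ 2 * k * c) (hc : 1 ≤ 2 * (k + 1) * c) :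
    1 / (4 * k * L ^ 2) ≤ (1 / k + 1 / (k + 1)) / (4 * s * (2 * s + 1 / (k + 1))) := by
  have hc₀ : 0 < c := by nlinarith
  have hL : 0 < L := by linarith
  rw [div_le_div_iff₀ (by positivity) (by positivity)]
  field_simp
  nlinarith [mul_le_mul_of_nonneg_left hLk hL.le, mul_le_mul_of_nonneg_left hc hs.le,
    mul_le_mul_of_nonneg_left hsL (by positivity : 0 ≤ 2 * (k + 1) * (L + s))]

theorem log_le_two_mul_mul_log_two_sub_half {x : ℝ} (hx : 0 < x) :
    log x ≤ 2 * x * (log 2 - 1 / 2) := by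
  have he := exp_one_gt_d9
  have h2 := log_two_gt_d9
  have hlog : log x ≤ x / exp 1 := by
    have := log_le_sub_one_of_pos (div_pos hx (exp_pos 1))
    rw [log_div hx.ne' (exp_pos 1).ne', log_exp] at this
    linarith
  refine hlog.trans ?_
  have hslope : 1 ≤ 2 * (log 2 - 1 / 2) * exp 1 := by nlinarith
  rw [div_le_iff₀ (exp_pos 1)]
  nlinarith [mul_le_mul_of_nonneg_left hslope hx.le]

theorem harmonic_sub_log_le {n : ℕ} (hn : 2 ≤ n) : (harmonic n : ℝ) - log n ≤ 3 / 2 - log 2 := by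
  have := strictAnti_eulerMascheroniSeq'.antitone hn
  simp only [eulerMascheroniSeq', if_neg (by omega : n ≠ 0), OfNat.ofNat_ne_zero, if_false] at this
  have h2 : (harmonic 2 : ℝ) = 3 / 2 := by norm_num [harmonic_succ]
  push_cast [h2] at this
  linarith

theorem one_le_harmonic_succ (n : ℕ) : 1 ≤ harmonic (n + 1) := by
  induction n with
  | zero => simp
  | succ n ih =>
    rw [harmonic_succ]
    exact le_add_of_le_of_nonneg ih (by positivity)

noncomputable def lerayGroundState (n : ℕ) : ℝ := √((harmonic n : ℝ) - 1)

theorem lerayGroundState_nonneg (n : ℕ) : 0 ≤ lerayGroundState n :=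
  sqrt_nonneg _

theorem lerayGroundState_one : lerayGroundState 1 = 0 := by
  simp [lerayGroundState]

theorem lerayGroundState_succ_sq (n : ℕ) :
    lerayGroundState (n + 1) ^ 2 = harmonic (n + 1) - 1 :=
  sq_sqrt (sub_nonneg.2 (by exact_mod_cast one_le_harmonic_succ n))

theorem lerayGroundState_pos (n : ℕ) : 0 < lerayGroundState (n + 2) := by
  refine sqrt_pos.2 (sub_pos.2 ?_)
  rw [harmonic_succ]
  exact_mod_cast lt_add_of_le_of_pos (one_le_harmonic_succ n) (by positivity)

theorem mul_lerayGroundState_sq_sub_sq (n : ℕ) :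
    ((n : ℝ) + 2) * (lerayGroundState (n + 2) ^ 2 - lerayGroundState (n + 1) ^ 2) = 1 := by
  rw [lerayGroundState_succ_sq, lerayGroundState_succ_sq, harmonic_succ]
  push_cast
  field_simp
  ring

theorem one_div_le_hardyWeight_leray (n : ℕ) :
    1 / (4 * ((n : ℝ) + 2) * log ((n : ℝ) + 2) ^ 2) ≤
      hardyWeight (fun n ↦ (n : ℝ) + 2) (fun n ↦ lerayGroundState (n + 1)) n := by
  have hk : (0 : ℝ) < (n : ℝ) + 2 := by positivity
  have hlog := harmonic_sub_log_le (n := n + 2) (by omega)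
  have hlog2 := log_two_gt_d9
  push_cast at hlog
  refine (one_div_four_mul_sq_le_div hk (pow_pos (lerayGroundState_pos n) 2) ?_
    (log_le_two_mul_mul_log_two_sub_half hk) (by nlinarith)).trans ?_
  · rw [lerayGroundState_succ_sq]
    linarith
  · refine (div_le_ground_state_weight hk (lerayGroundState_nonneg (n + 1))
      (lerayGroundState_pos n) (lerayGroundState_pos (n + 1)) (mul_lerayGroundState_sq_sub_sq n)
      (by exact_mod_cast mul_lerayGroundState_sq_sub_sq (n + 1))).trans_eq ?_
    simp only [hardyWeight]
    push_cast
    ring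

theorem discrete_leray_general (u : ℕ → ℝ) (hfin : ∃ N, ∀ n ≥ N, u n = 0)
    (h1 : u 1 = 0) :
    ∑' n : ℕ, ((n : ℝ) + 2) * (u (n + 2) - u (n + 1)) ^ 2 ≥
      (1 / 4) * ∑' n : ℕ,
        (u (n + 2)) ^ 2 / (((n : ℝ) + 2) * (Real.log ((n : ℝ) + 2)) ^ 2) := by
  obtain ⟨N, hN⟩ := hfin
  rw [tsum_eq_sum (s := range N) fun n hn ↦ ?_, tsum_eq_sum (s := range N) fun n hn ↦ ?_,
    mul_sum, ge_iff_le]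
  · calc ∑ n ∈ range N, 1 / 4 * (u (n + 2) ^ 2 / (((n : ℝ) + 2) * log ((n : ℝ) + 2) ^ 2))
        ≤ ∑ n ∈ range N, hardyWeight (fun n ↦ (n : ℝ) + 2)
            (fun n ↦ lerayGroundState (n + 1)) n * u (n + 2) ^ 2 := by
          refine sum_le_sum fun n _ ↦ ?_
          calc 1 / 4 * (u (n + 2) ^ 2 / (((n : ℝ) + 2) * log ((n : ℝ) + 2) ^ 2))
              = 1 / (4 * ((n : ℝ) + 2) * log ((n : ℝ) + 2) ^ 2) * u (n + 2) ^ 2 := by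
                simp only [div_eq_mul_inv, mul_inv]
                ring
            _ ≤ _ := by gcongr; exact one_div_le_hardyWeight_leray n
      _ ≤ ∑ n ∈ range N, ((n : ℝ) + 2) * (u (n + 2) - u (n + 1)) ^ 2 :=
          sum_hardyWeight_mul_sq_le _ _ (fun n ↦ u (n + 1)) (fun n ↦ by positivity)
            lerayGroundState_one lerayGroundState_pos h1 (hN (N + 1) (by omega))
  all_goals
    rw [mem_range, not_lt] at hn
    simp [hN (n + 2) (by omega), hN (n + 1) (by omega)]

/-- Discrete Leray inequality on ℕ:
`∑_{n≥2} n |∇u_n|² ≥ (1/4) ∑_{n≥2} u_n² / (n (ln n)²)`. -/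
theorem discrete_leray (u : ℕ → ℝ) (hfin : ∃ N, ∀ n ≥ N, u n = 0)
    (h0 : u 0 = 0) (h1 : u 1 = 0) :
    ∑' n : ℕ, ((n : ℝ) + 2) * (u (n + 2) - u (n + 1)) ^ 2 ≥
      (1 / 4) * ∑' n : ℕ,
        (u (n + 2)) ^ 2 / (((n : ℝ) + 2) * (Real.log ((n : ℝ) + 2)) ^ 2) :=
  discrete_leray_general u hfin h1
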